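/- For n ∈ ℕ_+ let U(n,x) = H_2(n−1,x)·H_2(n+1,x) − H_2(n,x)². Then there exists a polynomial V(n,x) ∈ ℤ[x] of degree n−1 such that U(n,x) = V(n,x²). Moreover, writing V(n,x) = Σ_{i=0}^{n−1} a(i,n)·x^i, one has a(0,2n) = −((2n)!/(2^n·n!))², a(0,2n+1) = (1/(2n+1))·((2n+1)!/(2^n·n!))², a(1,2n) = −a(0,2n), a(1,2n+1) = 0, and a(i,n) > 0 for every i ∈ {2, …, n−1}. -/

import Mathlib

open Polynomial

/-- `HP d n` is the polynomial `H_d(n,x) = Σ_{j=0}^{⌊n/d⌋} n!/((n−dj)!·j!·d^j)·x^{n−dj}`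
(each coefficient is an integer, so the natural-number division below is exact). -/
noncomputable def HP (d n : ℕ) : Polynomial ℤ :=
  ∑ j ∈ Finset.range (n / d + 1),
    Polynomial.C ((Nat.factorial n / (Nat.factorial (n - d * j) * Nat.factorial j * d ^ j) : ℕ) : ℤ) *
      Polynomial.X ^ (n - d * j)

/-!
Write `H n = HP 2 n`. The explicit formula gives `H (n + 2) = X * H (n + 1) + (n + 1) * H n`, hence
`(H (n + 1))' = (n + 1) * H n`, `H n` is monic of degree `n` with the parity of `n`, and its
coefficients are nonnegative, positive in the degrees `≤ n` of the parity of `n`.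

For `U k = H k * H (k + 2) - H (k + 1) ^ 2` the recursion gives
`U (k + 1) = H (k + 1) ^ 2 - (k + 1) * U k`, so `U k = E k - O k`, where `E k` and `O k` collect the
terms `(k! / j!) * H j ^ 2` with `k - j` even, resp. odd; moreover `(U k)' = 2 * X * O k`.
So `U k` is even, monic of degree `2 k`, and `i` times its coefficient of `x ^ (2 i)` is the
coefficient of `x ^ (2 i - 2)` in `O k = k * E (k - 1)`, which dominates `k * H (k - 1) ^ 2`
coefficientwise. For `i = 1` this coefficient is `O k (0)`, and `H (2 n) (0) = (2 n - 1)‼`,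
`H (2 n + 1) (0) = 0` give `O k (0) = 0` for even `k` and `E k (0) = 0` for odd `k`.
-/

open Finset
open scoped Nat

namespace Nat

theorem factorial_two_mul (j : ℕ) : (2 * j)! = 2 ^ j * j ! * (2 * j - 1)‼ := by
  rcases j with _ | j
  · rfl
  · rw [show 2 * (j + 1) - 1 = 2 * j + 1 by omega, show 2 * (j + 1) = 2 * j + 1 + 1 by ring,
      factorial_eq_mul_doubleFactorial, show 2 * j + 1 + 1 = 2 * (j + 1) by ring,
      doubleFactorial_two_mul]

theorem factorial_two_mul_div (n : ℕ) : (2 * n)! / (2 ^ n * n !) = (2 * n - 1)‼ :=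
  Nat.div_eq_of_eq_mul_left (by positivity) (by rw [factorial_two_mul]; ring)

theorem factorial_two_mul_add_one_div (n : ℕ) : (2 * n + 1)! / (2 ^ n * n !) = (2 * n + 1)‼ :=
  Nat.div_eq_of_eq_mul_left (by positivity)
    (by rw [factorial_eq_mul_doubleFactorial, doubleFactorial_two_mul])

theorem doubleFactorial_sq_div (n : ℕ) :
    (2 * n + 1)‼ ^ 2 / (2 * n + 1) = (2 * n - 1)‼ * (2 * n + 1)‼ :=
  Nat.div_eq_of_eq_mul_left (by omega) (by rw [sq]; nth_rw 1 [doubleFactorial_add_one]; ring)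

end Nat

namespace Polynomial

theorem expand_contract_of_coeff_eq_zero {R : Type*} [CommSemiring R] {p : ℕ} (hp : p ≠ 0)
    {f : R[X]} (hf : ∀ m, ¬p ∣ m → f.coeff m = 0) : expand R p (contract p f) = f := by
  ext m
  rw [coeff_expand (Nat.pos_of_ne_zero hp)]
  split_ifs with h
  · rw [coeff_contract hp, Nat.div_mul_cancel h]
  · exact (hf m h).symm

section Semiring

variable {R : Type*} [Semiring R] {p q : R[X]}

theorem coeff_mul_eq_zero_of_odd {a b m : ℕ} (hp : ∀ i, Odd (a + i) → p.coeff i = 0)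
    (hq : ∀ j, Odd (b + j) → q.coeff j = 0) (hm : Odd (a + b + m)) : (p * q).coeff m = 0 := by
  rw [coeff_mul]
  refine sum_eq_zero fun ⟨i, j⟩ hij => ?_
  rw [HasAntidiagonal.mem_antidiagonal] at hij
  subst hij
  rcases Nat.even_or_odd (a + i) with hi | hi
  · have hj : Odd (b + j) := by
      rw [Nat.odd_iff] at hm ⊢
      rw [Nat.even_iff] at hi
      omega
    rw [hq j hj, mul_zero]
  · rw [hp i hi, zero_mul]

variable [PartialOrder R] [IsOrderedRing R]

theorem coeff_mul_nonneg (hp : ∀ i, 0 ≤ p.coeff i) (hq : ∀ j, 0 ≤ q.coeff j) (m : ℕ) :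
    0 ≤ (p * q).coeff m := by
  rw [coeff_mul]
  exact sum_nonneg fun x _ => mul_nonneg (hp x.1) (hq x.2)

theorem coeff_mul_le_coeff_mul (hp : ∀ i, 0 ≤ p.coeff i) (hq : ∀ j, 0 ≤ q.coeff j)
    (i j : ℕ) : p.coeff i * q.coeff j ≤ (p * q).coeff (i + j) := by
  rw [coeff_mul]
  exact single_le_sum (f := fun x : ℕ × ℕ => p.coeff x.1 * q.coeff x.2) (a := (i, j))
    (fun x _ => mul_nonneg (hp x.1) (hq x.2)) (HasAntidiagonal.mem_antidiagonal.2 rfl)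

end Semiring

end Polynomial

/-- The number of `j`-edge matchings of the complete graph on `n` vertices. -/
def matchingNumber (n j : ℕ) : ℕ := n.choose (2 * j) * (2 * j - 1)‼

theorem factorial_div_eq_matchingNumber {n j : ℕ} (h : 2 * j ≤ n) :
    n ! / ((n - 2 * j)! * j ! * 2 ^ j) = matchingNumber n j := by
  refine Nat.div_eq_of_eq_mul_left (by positivity) ?_
  rw [matchingNumber, ← Nat.choose_mul_factorial_mul_factorial h, Nat.factorial_two_mul]
  ring

theorem matchingNumber_eq_zero {n j : ℕ} (h : n < 2 * j) : matchingNumber n j = 0 := by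
  rw [matchingNumber, Nat.choose_eq_zero_of_lt h, zero_mul]

@[simp]
theorem matchingNumber_zero (n : ℕ) : matchingNumber n 0 = 1 := by
  simp [matchingNumber]

theorem matchingNumber_add_two_succ (n j : ℕ) :
    matchingNumber (n + 2) (j + 1) =
      matchingNumber (n + 1) (j + 1) + (n + 1) * matchingNumber n j := by
  have hchoose := Nat.add_one_mul_choose_eq n (2 * j)
  rw [matchingNumber, matchingNumber, matchingNumber, show 2 * (j + 1) = 2 * j + 1 + 1 by ring,
    Nat.choose_succ_succ' (n + 1), Nat.add_sub_cancel, Nat.doubleFactorial_add_one, add_mul,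
    ← mul_assoc ((n + 1).choose (2 * j + 1)), ← hchoose]
  ring

theorem HP_two_eq_sum {n N : ℕ} (hN : n / 2 < N) :
    HP 2 n = ∑ j ∈ range N, C (matchingNumber n j : ℤ) * X ^ (n - 2 * j) := by
  rw [HP, ← sum_subset (range_subset_range.2 (show n / 2 + 1 ≤ N by omega))]
  · refine sum_congr rfl fun j hj => ?_
    rw [factorial_div_eq_matchingNumber (by rw [mem_range] at hj; omega)]
  · intro j _ hj
    rw [mem_range] at hj
    simp [matchingNumber_eq_zero (show n < 2 * j by omega)]

theorem HP_two_zero : HP 2 0 = 1 := by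
  simp [HP_two_eq_sum (show 0 / 2 < 1 by norm_num)]

theorem HP_two_one : HP 2 1 = X := by
  simp [HP_two_eq_sum (show 1 / 2 < 1 by norm_num)]

theorem X_mul_matchingTerm (n j : ℕ) :
    X * (C (matchingNumber (n + 1) j : ℤ) * X ^ (n + 1 - 2 * j)) =
      C (matchingNumber (n + 1) j : ℤ) * X ^ (n + 2 - 2 * j) := by
  rcases le_or_gt (2 * j) (n + 1) with h | h
  · rw [mul_left_comm, ← pow_succ', show n + 1 - 2 * j + 1 = n + 2 - 2 * j by omega]
  · simp [matchingNumber_eq_zero h]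

theorem HP_two_add_two (n : ℕ) :
    HP 2 (n + 2) = X * HP 2 (n + 1) + ((n + 1 : ℕ) : ℤ[X]) * HP 2 n := by
  rw [HP_two_eq_sum (show (n + 2) / 2 < n + 3 by omega),
    HP_two_eq_sum (show (n + 1) / 2 < n + 3 by omega), HP_two_eq_sum (show n / 2 < n + 2 by omega),
    mul_sum, mul_sum, sum_range_succ', sum_range_succ' _ (n + 2)]
  simp only [X_mul_matchingTerm, matchingNumber_add_two_succ]
  rw [add_right_comm, ← sum_add_distrib]
  congr 1
  refine sum_congr rfl fun j _ => ?_
  rw [show n + 2 - 2 * (j + 1) = n - 2 * j by omega]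
  simp only [Nat.cast_add, Nat.cast_mul, map_add, map_mul, map_natCast]
  ring

theorem derivative_HP_two_succ (n : ℕ) :
    derivative (HP 2 (n + 1)) = ((n + 1 : ℕ) : ℤ[X]) * HP 2 n := by
  induction n using Nat.twoStepInduction with
  | zero => simp [HP_two_zero, HP_two_one]
  | one => simp [HP_two_add_two 0, HP_two_zero, HP_two_one]; ring
  | more n ih₀ ih₁ =>
    rw [HP_two_add_two (n + 1), derivative_add, derivative_mul, derivative_natCast_mul,
      derivative_X, ih₀, ih₁, HP_two_add_two n]
    push_cast
    ring

theorem coeff_HP_two_of_odd {n m : ℕ} (h : Odd (n + m)) : (HP 2 n).coeff m = 0 := by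
  rw [Nat.odd_iff] at h
  induction n using Nat.twoStepInduction generalizing m with
  | zero => simp [HP_two_zero, coeff_one, show m ≠ 0 by omega]
  | one => simp [HP_two_one, coeff_X, show 1 ≠ m by omega]
  | more n ih₀ ih₁ =>
    rw [HP_two_add_two, coeff_add, coeff_natCast_mul, ih₀ (by omega), mul_zero, add_zero]
    rcases m with _ | m
    · simp
    · rw [coeff_X_mul, ih₁ (by omega)]

theorem coeff_HP_two_nonneg (n m : ℕ) : 0 ≤ (HP 2 n).coeff m := by
  induction n using Nat.twoStepInduction generalizing m with
  | zero => rw [HP_two_zero, coeff_one]; positivity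
  | one => rw [HP_two_one, coeff_X]; positivity
  | more n ih₀ ih₁ =>
    rw [HP_two_add_two, coeff_add, coeff_natCast_mul]
    have hX : 0 ≤ (X * HP 2 (n + 1)).coeff m := by
      rcases m with _ | m
      · simp
      · rw [coeff_X_mul]; exact ih₁ m
    have := ih₀ m
    positivity

theorem coeff_HP_two_pos {n m : ℕ} (hm : m ≤ n) (h : Even (n + m)) : 0 < (HP 2 n).coeff m := by
  rw [Nat.even_iff] at h
  induction n using Nat.twoStepInduction generalizing m with
  | zero => simp [HP_two_zero, show m = 0 by omega]
  | one => simp [HP_two_one, show m = 1 by omega]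
  | more n ih₀ ih₁ =>
    rw [HP_two_add_two, coeff_add, coeff_natCast_mul]
    rcases m with _ | m
    · have := ih₀ (Nat.zero_le n) (by omega)
      rw [mul_coeff_zero, coeff_X_zero, zero_mul, zero_add]
      positivity
    · rw [coeff_X_mul]
      have := coeff_HP_two_nonneg n (m + 1)
      by_cases hmn : m + 1 ≤ n
      · have := ih₀ hmn (by omega)
        have := coeff_HP_two_nonneg (n + 1) m
        positivity
      · have := ih₁ (show m ≤ n + 1 by omega) (by omega)
        positivity

theorem HP_two_monic_and_natDegree (n : ℕ) : (HP 2 n).Monic ∧ (HP 2 n).natDegree = n := by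
  induction n using Nat.twoStepInduction with
  | zero => simp [HP_two_zero]
  | one => simp [HP_two_one]
  | more n ih₀ ih₁ =>
    have hX : (X * HP 2 (n + 1)).Monic := monic_X.mul ih₁.1
    have hXdeg : (X * HP 2 (n + 1)).natDegree = n + 2 := by
      rw [monic_X.natDegree_mul ih₁.1, natDegree_X, ih₁.2]; ring
    have hlt : (((n + 1 : ℕ) : ℤ[X]) * HP 2 n).degree < (X * HP 2 (n + 1)).degree := by
      rw [natCast_mul, degree_eq_natDegree hX.ne_zero, hXdeg]
      refine (degree_smul_le _ _).trans_lt ?_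
      rw [degree_eq_natDegree ih₀.1.ne_zero, ih₀.2]
      exact_mod_cast (by omega : n < n + 2)
    rw [HP_two_add_two]
    exact ⟨hX.add_of_left hlt, by rw [natDegree_add_eq_left_of_degree_lt hlt, hXdeg]⟩

theorem eval_zero_HP_two_two_mul (n : ℕ) : (HP 2 (2 * n)).eval 0 = ((2 * n - 1)‼ : ℤ) := by
  induction n with
  | zero => simp [HP_two_zero]
  | succ n ih =>
    rw [show 2 * (n + 1) = 2 * n + 2 by ring, HP_two_add_two,
      show 2 * n + 2 - 1 = 2 * n + 1 by omega, Nat.doubleFactorial_add_one]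
    simp [ih]

theorem eval_zero_HP_two_two_mul_add_one (n : ℕ) : (HP 2 (2 * n + 1)).eval 0 = 0 := by
  rw [← coeff_zero_eq_eval_zero, coeff_HP_two_of_odd (by simp)]

/-- `turan k` is the paper's `U(k + 1)`. -/
noncomputable def turan (k : ℕ) : ℤ[X] := HP 2 k * HP 2 (k + 2) - HP 2 (k + 1) ^ 2

/- `sqSumEven k` and `sqSumOdd k` are the sums of `(k! / j!) • HP 2 j ^ 2` over the `j ≤ k` with
`k - j` even, resp. odd. -/
mutual
noncomputable def sqSumEven : ℕ → ℤ[X]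
  | 0 => 1
  | k + 1 => HP 2 (k + 1) ^ 2 + ((k + 1 : ℕ) : ℤ[X]) * sqSumOdd k
noncomputable def sqSumOdd : ℕ → ℤ[X]
  | 0 => 0
  | k + 1 => ((k + 1 : ℕ) : ℤ[X]) * sqSumEven k
end

theorem turan_eq_sqSumEven_sub_sqSumOdd (k : ℕ) : turan k = sqSumEven k - sqSumOdd k := by
  induction k with
  | zero => simp [turan, sqSumEven, sqSumOdd, HP_two_add_two 0, HP_two_zero, HP_two_one]; ring
  | succ k ih =>
    rw [turan] at ih ⊢
    rw [sqSumEven, sqSumOdd, HP_two_add_two (k + 1)]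
    rw [HP_two_add_two k] at ih ⊢
    push_cast at ih ⊢
    linear_combination (-(k : ℤ[X]) - 1) * ih

theorem HP_two_succ_mul_HP_two (k : ℕ) :
    HP 2 (k + 1) * HP 2 k = X * (sqSumEven k + sqSumOdd k) := by
  induction k with
  | zero => simp [sqSumEven, sqSumOdd, HP_two_zero, HP_two_one]
  | succ k ih =>
    rw [HP_two_add_two, sqSumEven, sqSumOdd]
    push_cast
    linear_combination ((k : ℤ[X]) + 1) * ih

theorem derivative_turan (k : ℕ) : derivative (turan k) = 2 * X * sqSumOdd k := by
  rcases k with _ | k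
  · simp [turan, sqSumOdd, HP_two_add_two 0, HP_two_zero, HP_two_one]; ring
  · have hU := turan_eq_sqSumEven_sub_sqSumOdd k
    have hH := HP_two_succ_mul_HP_two k
    rw [turan] at hU ⊢
    simp only [sqSumOdd, derivative_sub, derivative_mul, derivative_sq, derivative_HP_two_succ,
      map_ofNat]
    rw [HP_two_add_two (k + 1)]
    rw [HP_two_add_two k] at hU ⊢
    push_cast at hU ⊢
    linear_combination ((k : ℤ[X]) + 1) * (X * hU + hH)

theorem coeff_HP_two_sq_nonneg (k m : ℕ) : 0 ≤ (HP 2 k ^ 2).coeff m := by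
  rw [sq]
  exact coeff_mul_nonneg (coeff_HP_two_nonneg k) (coeff_HP_two_nonneg k) m

theorem coeff_sqSum_nonneg (k m : ℕ) :
    0 ≤ (sqSumEven k).coeff m ∧ 0 ≤ (sqSumOdd k).coeff m := by
  induction k generalizing m with
  | zero =>
    simp only [sqSumEven, sqSumOdd, coeff_one, coeff_zero]
    exact ⟨by positivity, le_rfl⟩
  | succ k ih =>
    rw [sqSumEven, sqSumOdd, coeff_add, coeff_natCast_mul, coeff_natCast_mul]
    have := coeff_HP_two_sq_nonneg (k + 1) m
    obtain ⟨_, _⟩ := ih m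
    constructor <;> positivity

theorem coeff_HP_two_sq_le_coeff_sqSumEven (k m : ℕ) :
    (HP 2 k ^ 2).coeff m ≤ (sqSumEven k).coeff m := by
  rcases k with _ | k
  · simp [sqSumEven, HP_two_zero]
  · rw [sqSumEven, coeff_add, coeff_natCast_mul, le_add_iff_nonneg_right]
    exact mul_nonneg (by positivity) (coeff_sqSum_nonneg k m).2

theorem sqSumEven_monic_and_degree (k : ℕ) : (sqSumEven k).Monic ∧
    (sqSumEven k).natDegree = 2 * k ∧ (sqSumOdd k).degree < (2 * k : ℕ) := by
  induction k with
  | zero => simp [sqSumEven, sqSumOdd]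
  | succ k ih =>
    obtain ⟨hmonic, hdeg, hodd⟩ := ih
    obtain ⟨hHmonic, hHdeg⟩ := HP_two_monic_and_natDegree (k + 1)
    have hsq : (HP 2 (k + 1) ^ 2).degree = (2 * (k + 1) : ℕ) := by
      rw [degree_eq_natDegree (hHmonic.pow 2).ne_zero, hHmonic.natDegree_pow, hHdeg, mul_comm]
    have hlt : (((k + 1 : ℕ) : ℤ[X]) * sqSumOdd k).degree < (HP 2 (k + 1) ^ 2).degree := by
      rw [natCast_mul, hsq]
      exact (degree_smul_le _ _).trans_lt (hodd.trans (by exact_mod_cast (by omega)))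
    refine ⟨hHmonic.pow 2 |>.add_of_left hlt, ?_, ?_⟩
    · rw [sqSumEven, natDegree_add_eq_left_of_degree_lt hlt, hHmonic.natDegree_pow, hHdeg,
        mul_comm]
    · rw [sqSumOdd, natCast_mul]
      refine (degree_smul_le _ _).trans_lt ?_
      rw [degree_eq_natDegree hmonic.ne_zero, hdeg]
      exact_mod_cast (by omega)

theorem eval_zero_sqSumOdd_two_mul (n : ℕ) : (sqSumOdd (2 * n)).eval 0 = 0 := by
  induction n with
  | zero => simp [sqSumOdd]
  | succ n ih =>
    rw [show 2 * (n + 1) = 2 * n + 1 + 1 by ring, sqSumOdd, sqSumEven]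
    simp [eval_zero_HP_two_two_mul_add_one, ih]

theorem eval_zero_sqSumEven_two_mul_add_one (n : ℕ) : (sqSumEven (2 * n + 1)).eval 0 = 0 := by
  simp [sqSumEven, eval_zero_HP_two_two_mul_add_one, eval_zero_sqSumOdd_two_mul]

theorem coeff_turan_of_odd {k m : ℕ} (hm : Odd m) : (turan k).coeff m = 0 := by
  have hH : ∀ n i, Odd (n + i) → (HP 2 n).coeff i = 0 := fun _ _ => coeff_HP_two_of_odd
  rw [Nat.odd_iff] at hm
  rw [turan, coeff_sub, sq,
    coeff_mul_eq_zero_of_odd (hH k) (hH (k + 2)) (Nat.odd_iff.2 (by omega)),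
    coeff_mul_eq_zero_of_odd (hH (k + 1)) (hH (k + 1)) (Nat.odd_iff.2 (by omega)), sub_zero]

theorem turan_monic_and_natDegree (k : ℕ) : (turan k).Monic ∧ (turan k).natDegree = 2 * k := by
  obtain ⟨hmonic, hdeg, hodd⟩ := sqSumEven_monic_and_degree k
  have hlt : (sqSumOdd k).degree < (sqSumEven k).degree := by
    rwa [degree_eq_natDegree hmonic.ne_zero, hdeg]
  rw [turan_eq_sqSumEven_sub_sqSumOdd]
  exact ⟨hmonic.sub_of_left hlt,
    by rw [natDegree_eq_of_degree_eq (degree_sub_eq_left_of_degree_lt hlt), hdeg]⟩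

theorem coeff_turan_two_mul_succ (k l : ℕ) :
    (turan k).coeff (2 * (l + 1)) * (l + 1) = (sqSumOdd k).coeff (2 * l) := by
  have h := congrArg (coeff · (2 * l + 1)) (derivative_turan k)
  simp only [coeff_derivative, mul_assoc, coeff_ofNat_mul, coeff_X_mul] at h
  rw [show 2 * l + 1 + 1 = 2 * (l + 1) by ring] at h
  push_cast at h
  linarith

theorem coeff_HP_two_sq_pos {m l : ℕ} (hl : 1 ≤ l) (hlm : l ≤ m) :
    0 < (HP 2 m ^ 2).coeff (2 * l) := by
  obtain ⟨p, q, hpq, hp, hq, hpe, hqe⟩ : ∃ p q, p + q = 2 * l ∧ p ≤ m ∧ q ≤ m ∧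
      Even (m + p) ∧ Even (m + q) := by
    simp only [Nat.even_iff]
    by_cases h : 2 * l ≤ m
    · exact ⟨m % 2, 2 * l - m % 2, by omega, by omega, by omega, by omega, by omega⟩
    · exact ⟨m, 2 * l - m, by omega, le_rfl, by omega, by omega, by omega⟩
  rw [sq, ← hpq]
  exact (mul_pos (coeff_HP_two_pos hp hpe) (coeff_HP_two_pos hq hqe)).trans_le
    (coeff_mul_le_coeff_mul (coeff_HP_two_nonneg m) (coeff_HP_two_nonneg m) p q)

theorem coeff_turan_two_mul_pos {k i : ℕ} (hi : 2 ≤ i) (hik : i ≤ k) :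
    0 < (turan k).coeff (2 * i) := by
  obtain ⟨m, rfl⟩ : ∃ m, k = m + 1 := ⟨k - 1, by omega⟩
  obtain ⟨l, rfl⟩ : ∃ l, i = l + 1 := ⟨i - 1, by omega⟩
  have h := coeff_turan_two_mul_succ (m + 1) l
  rw [sqSumOdd, coeff_natCast_mul] at h
  have hT : 0 < (sqSumEven m).coeff (2 * l) :=
    (coeff_HP_two_sq_pos (by omega) (by omega)).trans_le (coeff_HP_two_sq_le_coeff_sqSumEven m _)
  have hprod : 0 < (turan (m + 1)).coeff (2 * (l + 1)) * (l + 1) := h ▸ by positivity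
  exact pos_of_mul_pos_left hprod (by positivity)

theorem coeff_two_turan (k : ℕ) : (turan k).coeff 2 = (sqSumOdd k).eval 0 := by
  simpa [coeff_zero_eq_eval_zero] using coeff_turan_two_mul_succ k 0

theorem eval_zero_turan_two_mul (n : ℕ) :
    (turan (2 * n)).eval 0 = ((2 * n - 1)‼ : ℤ) * ((2 * n + 1)‼ : ℤ) := by
  have h := eval_zero_HP_two_two_mul (n + 1)
  rw [show 2 * (n + 1) = 2 * n + 2 by ring, show 2 * n + 2 - 1 = 2 * n + 1 by omega] at h
  simp [turan, h, eval_zero_HP_two_two_mul, eval_zero_HP_two_two_mul_add_one]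

theorem eval_zero_turan_two_mul_add_one (n : ℕ) :
    (turan (2 * n + 1)).eval 0 = -((2 * n + 1)‼ : ℤ) ^ 2 := by
  have h := eval_zero_HP_two_two_mul (n + 1)
  rw [show 2 * (n + 1) = 2 * n + 1 + 1 by ring, show 2 * n + 1 + 1 - 1 = 2 * n + 1 by omega] at h
  simp [turan, h, eval_zero_HP_two_two_mul_add_one]

theorem coeff_two_turan_two_mul (n : ℕ) : (turan (2 * n)).coeff 2 = 0 := by
  rw [coeff_two_turan, eval_zero_sqSumOdd_two_mul]

theorem coeff_two_turan_two_mul_add_one (n : ℕ) :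
    (turan (2 * n + 1)).coeff 2 = -(turan (2 * n + 1)).coeff 0 := by
  rw [coeff_two_turan, coeff_zero_eq_eval_zero, turan_eq_sqSumEven_sub_sqSumOdd, eval_sub,
    eval_zero_sqSumEven_two_mul_add_one, zero_sub, neg_neg]

theorem expand_contract_two_turan (k : ℕ) : expand ℤ 2 (contract 2 (turan k)) = turan k :=
  expand_contract_of_coeff_eq_zero two_ne_zero fun _ hm =>
    coeff_turan_of_odd (Nat.odd_iff.2 (Nat.two_dvd_ne_zero.1 hm))

theorem degree_contract_two_turan (k : ℕ) : (contract 2 (turan k)).degree = k := by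
  obtain ⟨hmonic, hdeg⟩ := turan_monic_and_natDegree k
  have hne : contract 2 (turan k) ≠ 0 := fun h => hmonic.ne_zero <| by
    rw [← expand_contract_two_turan k, h, map_zero]
  have h := natDegree_expand 2 (contract 2 (turan k))
  rw [expand_contract_two_turan, hdeg] at h
  rw [degree_eq_natDegree hne]
  exact_mod_cast (by omega : _ = k)

theorem stmt1 : ∃ V : ℕ → Polynomial ℤ,
    (∀ n : ℕ, 1 ≤ n →
      HP 2 (n - 1) * HP 2 (n + 1) - (HP 2 n) ^ 2 = (V n).comp (Polynomial.X ^ 2) ∧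
      (V n).degree = ((n - 1 : ℕ) : WithBot ℕ) ∧
      (∀ i : ℕ, 2 ≤ i → i ≤ n - 1 → 0 < (V n).coeff i)) ∧
    (∀ n : ℕ, 1 ≤ n →
      (V (2 * n)).coeff 0 =
        -((((2 * n).factorial / (2 ^ n * n.factorial) : ℕ)) : ℤ) ^ 2 ∧
      (V (2 * n)).coeff 1 = -(V (2 * n)).coeff 0) ∧
    (∀ n : ℕ,
      (V (2 * n + 1)).coeff 0 =
        (((((2 * n + 1).factorial / (2 ^ n * n.factorial)) ^ 2 / (2 * n + 1) : ℕ)) : ℤ) ∧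
      (V (2 * n + 1)).coeff 1 = 0) := by
  refine ⟨fun n => contract 2 (turan (n - 1)), fun n hn => ?_, fun n hn => ?_, fun n => ?_⟩
  · obtain ⟨k, rfl⟩ : ∃ k, n = k + 1 := ⟨n - 1, by omega⟩
    simp only [Nat.add_sub_cancel]
    refine ⟨?_, degree_contract_two_turan k, fun i hi hik => ?_⟩
    · rw [← expand_eq_comp_X_pow, expand_contract_two_turan, turan]
    · rw [coeff_contract two_ne_zero, mul_comm]
      exact coeff_turan_two_mul_pos hi hik
  · obtain ⟨m, rfl⟩ : ∃ m, n = m + 1 := ⟨n - 1, by omega⟩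
    have hV : 2 * (m + 1) - 1 = 2 * m + 1 := by omega
    simp only [hV, coeff_contract two_ne_zero, zero_mul, one_mul]
    refine ⟨?_, coeff_two_turan_two_mul_add_one m⟩
    rw [coeff_zero_eq_eval_zero, eval_zero_turan_two_mul_add_one, Nat.factorial_two_mul_div, hV]
  · simp only [Nat.add_sub_cancel, coeff_contract two_ne_zero, zero_mul, one_mul]
    refine ⟨?_, coeff_two_turan_two_mul n⟩
    rw [coeff_zero_eq_eval_zero, eval_zero_turan_two_mul, Nat.factorial_two_mul_add_one_div,
      Nat.doubleFactorial_sq_div]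
    push_cast
    ring
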